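/- arXiv:1903.12254 — 9 statements merged into one kernel-verified Lean document; each statement's English description precedes it below -/
import Mathlib

section
/- Let ε > 0 and Δ > 0, and let Lap(Δ/ε) denote the Borel measure on ℝ with density x ↦ (ε/(2Δ))·exp(−ε·|x|/Δ) with respect to Lebesgue measure. Then for all reals a₁, a₂ with |a₁ − a₂| ≤ Δ and every measurable set E ⊆ ℝ, Lap(Δ/ε){η | a₁ + η ∈ E} ≤ exp(ε) · Lap(Δ/ε){η | a₂ + η ∈ E}. That is, the Laplace mechanism with noise scale Δ/ε is ε-differentially private for queries of sensitivity Δ. -/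
/-!
Under the shift `η ↦ a + η` a measure with density `d` becomes the measure with density
`d (· - a)`, so the two output distributions are compared through their densities. For the
Laplace density, `exp (-(ε |y - a₁|) / Δ) ≤ exp ε · exp (-(ε |y - a₂|) / Δ)` by the triangle
inequality `|y - a₂| ≤ |y - a₁| + |a₁ - a₂|`.
-/

open MeasureTheory
open scoped ENNReal

section Shift

variable {G : Type*} [MeasurableSpace G] [AddCommGroup G] [MeasurableAdd G] [MeasurableSub G]
  {μ : Measure G} [μ.IsAddLeftInvariant] {d : G → ℝ≥0∞}

theorem withDensity_preimage_add_left (hd : Measurable d) (a : G) {E : Set G}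
    (hE : MeasurableSet E) :
    μ.withDensity d {η | a + η ∈ E} = ∫⁻ y in E, d (y - a) ∂μ := by
  rw [withDensity_apply (s := {η | a + η ∈ E}) _ (measurable_const_add a hE)]
  have h := (measurePreserving_add_left μ a).setLIntegral_comp_preimage hE
    (hd.comp (measurable_sub_const a))
  simp only [Function.comp_apply, add_sub_cancel_left] at h
  exact h

theorem withDensity_preimage_add_left_le (hd : Measurable d) {a₁ a₂ : G} {c : ℝ≥0∞}
    (hdc : ∀ y, d (y - a₁) ≤ c * d (y - a₂)) {E : Set G} (hE : MeasurableSet E) :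
    μ.withDensity d {η | a₁ + η ∈ E} ≤ c * μ.withDensity d {η | a₂ + η ∈ E} := by
  rw [withDensity_preimage_add_left hd a₁ hE, withDensity_preimage_add_left hd a₂ hE]
  exact (lintegral_mono fun y => hdc y).trans_eq
    (lintegral_const_mul c (hd.comp (measurable_sub_const a₂)))

end Shift

theorem Real.exp_neg_mul_abs_div_le {ε Δ u v : ℝ} (hε : 0 ≤ ε) (hΔ : 0 < Δ)
    (huv : |u - v| ≤ Δ) :
    Real.exp (-(ε * |u|) / Δ) ≤ Real.exp ε * Real.exp (-(ε * |v|) / Δ) := by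
  rw [← Real.exp_add, Real.exp_le_exp, div_le_iff₀ hΔ, add_mul, div_mul_cancel₀ _ hΔ.ne']
  have hv : |v| ≤ |u| + Δ := by linarith [abs_sub_abs_le_abs_sub v u, abs_sub_comm u v]
  nlinarith

/-- The Laplace mechanism with noise scale `Δ/ε` is `ε`-differentially private for queries
of sensitivity `Δ`. -/
theorem laplace_mechanism_dp (ε Δ : ℝ) (hε : 0 < ε) (hΔ : 0 < Δ)
    (Lap : Measure ℝ)
    (hLap : Lap = volume.withDensity
      (fun x => ENNReal.ofReal ((ε / (2 * Δ)) * Real.exp (-(ε * |x|) / Δ))))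
    (a₁ a₂ : ℝ) (hadj : |a₁ - a₂| ≤ Δ) (E : Set ℝ) (hE : MeasurableSet E) :
    Lap {η | a₁ + η ∈ E} ≤ ENNReal.ofReal (Real.exp ε) * Lap {η | a₂ + η ∈ E} := by
  subst hLap
  refine withDensity_preimage_add_left_le (by fun_prop) (fun y => ?_) hE
  rw [← ENNReal.ofReal_mul (Real.exp_nonneg ε), mul_left_comm]
  have hshift : |(y - a₁) - (y - a₂)| ≤ Δ := by rwa [sub_sub_sub_cancel_left, abs_sub_comm]
  gcongr
  exact Real.exp_neg_mul_abs_div_le hε.le hΔ hshift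
end

section
/- Let Ω and B be types, let μ : Ω → ℝ≥0∞, and let M₁, M₂ : Ω → B. Suppose there is an injective function f : Ω → Ω such that for every ω, M₁ ω = M₂ (f ω) and μ ω ≤ K · μ (f ω), where K : ℝ≥0∞. Then for every subset E ⊆ B, the sum ∑'_{ω with M₁ ω ∈ E} μ ω is at most K · ∑'_{ω with M₂ ω ∈ E} μ ω. -/
/-- Randomness-alignment proof principle (discrete setting): if an injective alignment `f`
of noise values makes the two runs `M₁` and `M₂` produce identical outputs while increasing
the probability mass by a factor of at most `K`, then the probability of any output event
under `M₁` is at most `K` times its probability under `M₂`. -/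
theorem randomness_alignment (Ω B : Type*) (μ : Ω → ENNReal) (M₁ M₂ : Ω → B)
    (K : ENNReal) (f : Ω → Ω) (hf : Function.Injective f)
    (halign : ∀ ω, M₁ ω = M₂ (f ω)) (hcost : ∀ ω, μ ω ≤ K * μ (f ω)) (E : Set B) :
    ∑' ω : {ω // M₁ ω ∈ E}, μ ω ≤ K * ∑' ω : {ω // M₂ ω ∈ E}, μ ω := by
  calc ∑' ω : {ω // M₁ ω ∈ E}, μ ω
      ≤ ∑' ω : {ω // M₁ ω ∈ E}, K * μ (f ω) := ENNReal.tsum_le_tsum fun ω => hcost ω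
    _ = K * ∑' ω : {ω // M₁ ω ∈ E}, μ (f ω) := ENNReal.tsum_mul_left
    _ ≤ K * ∑' ω : {ω // M₂ ω ∈ E}, μ ω := by
        refine mul_le_mul_right ?_ K
        refine Summable.tsum_le_tsum_of_inj (fun ω => ⟨f ω, by rw [← halign]; exact ω.2⟩)
          (fun a b h => Subtype.ext (hf (congrArg Subtype.val h)))
          (fun _ _ => zero_le) (fun ω => le_rfl) ENNReal.summable ENNReal.summable
end

section
/- Let A be a type and let μ₁, μ₁', μ₂, μ₂' : A → A → ℝ≥0∞ be (sub-probability) transition kernels. Let g₁, g₂, g₃ : A → A with g₂ injective, and let ε₁, ε₂ ≥ 0 be reals. Suppose that for all m, m', μ₁ m m' ≤ ENNReal.ofReal(exp ε₁) · μ₁' (g₁ m) (g₂ m'), and for all m, m', μ₂ m m' ≤ ENNReal.ofReal(exp ε₂) · μ₂' (g₂ m) (g₃ m'). Then for all m, m'': ∑'_{m'} μ₁ m m' · μ₂ m' m'' ≤ ENNReal.ofReal(exp(ε₁ + ε₂)) · ∑'_{w} μ₁' (g₁ m) w · μ₂' w (g₃ m''). -/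
/-- Sequential-composition case of the pointwise soundness argument:
aligned privacy costs add up under sequential composition of transition kernels. -/
theorem seq_composition_pointwise (A : Type*) (μ₁ μ₁' μ₂ μ₂' : A → A → ENNReal)
    (g₁ g₂ g₃ : A → A) (hg₂ : Function.Injective g₂)
    (ε₁ ε₂ : ℝ) (hε₁ : 0 ≤ ε₁) (hε₂ : 0 ≤ ε₂)
    (h₁ : ∀ m m', μ₁ m m' ≤ ENNReal.ofReal (Real.exp ε₁) * μ₁' (g₁ m) (g₂ m'))
    (h₂ : ∀ m m', μ₂ m m' ≤ ENNReal.ofReal (Real.exp ε₂) * μ₂' (g₂ m) (g₃ m'))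
    (m m'' : A) :
    ∑' m', μ₁ m m' * μ₂ m' m'' ≤
      ENNReal.ofReal (Real.exp (ε₁ + ε₂)) * ∑' w, μ₁' (g₁ m) w * μ₂' w (g₃ m'') := by
  have key : ∑' m', μ₁ m m' * μ₂ m' m'' ≤
      ENNReal.ofReal (Real.exp (ε₁ + ε₂)) * ∑' m', μ₁' (g₁ m) (g₂ m') * μ₂' (g₂ m') (g₃ m'') := by
    rw [← ENNReal.tsum_mul_left]
    refine ENNReal.tsum_le_tsum fun m' => ?_
    calc μ₁ m m' * μ₂ m' m''
        ≤ (ENNReal.ofReal (Real.exp ε₁) * μ₁' (g₁ m) (g₂ m')) *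
          (ENNReal.ofReal (Real.exp ε₂) * μ₂' (g₂ m') (g₃ m'')) :=
          mul_le_mul' (h₁ m m') (h₂ m' m'')
      _ = ENNReal.ofReal (Real.exp (ε₁ + ε₂)) *
          (μ₁' (g₁ m) (g₂ m') * μ₂' (g₂ m') (g₃ m'')) := by
          rw [Real.exp_add, ENNReal.ofReal_mul (Real.exp_nonneg _)]
          ring
  refine key.trans (mul_le_mul_right ?_ _)
  exact Summable.tsum_le_tsum_of_inj g₂ hg₂ (fun _ _ => zero_le) (fun _ => le_rfl)
    ENNReal.summable ENNReal.summable
end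

section
/- Let A and B be types, μ, ν : A → ℝ≥0∞, K : ℝ≥0∞, F : A → A injective, and e : A → B a function satisfying e (F m) = e m for every m. Suppose that for every subset S ⊆ A, ∑'_{a ∈ S} μ a ≤ K · ∑'_{b ∈ F '' S} ν b. Then for every subset V ⊆ B, ∑'_{a with e a ∈ V} μ a ≤ K · ∑'_{a with e a ∈ V} ν a. -/
/-- Output-projection step: a memory-level alignment bound, together with a return
expression `e` invariant under the alignment `F`, yields a bound on the probability of
any set of output values. -/
theorem output_projection (A B : Type*) (μ ν : A → ENNReal) (K : ENNReal)
    (F : A → A) (hF : Function.Injective F) (e : A → B) (he : ∀ m, e (F m) = e m)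
    (h : ∀ S : Set A, ∑' a : S, μ a ≤ K * ∑' b : (F '' S), ν b)
    (V : Set B) :
    ∑' a : {a | e a ∈ V}, μ a ≤ K * ∑' a : {a | e a ∈ V}, ν a := by
  set S : Set A := {a | e a ∈ V}
  refine (h S).trans (mul_le_mul_right ?_ K)
  have hsub : F '' S ⊆ S := by
    rintro _ ⟨m, hm, rfl⟩
    simpa [S, he m] using hm
  rw [tsum_subtype, tsum_subtype]
  exact ENNReal.tsum_le_tsum fun a => Set.indicator_le_indicator_of_subset hsub (fun _ => zero_le) a
end

section
/- Report Noisy Max is ε-differentially private: let n ≥ 1, ε > 0, let Lap(2/ε) be the Borel measure on ℝ with density x ↦ (ε/4)·exp(−(ε/2)·|x|) with respect to Lebesgue measure, and let μ be the product measure of n independent copies of Lap(2/ε) on (Fin n → ℝ). For q : Fin n → ℝ and j : Fin n define NM(q, j) := {η : Fin n → ℝ | (∀ i, q i + η i ≤ q j + η j) ∧ (∀ i, i < j → q i + η i < q j + η j)}, the event that j is the smallest index attaining the maximum noisy query answer. Then for all q₁, q₂ : Fin n → ℝ with |q₁ i − q₂ i| ≤ 1 for every i, and every j : Fin n, μ(NM(q₁,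 j)) ≤ exp(ε) · μ(NM(q₂, j)). -/
open MeasureTheory

/-- Monotonicity of the product measure. -/
lemma rnm_pi_mono {ι : Type*} [Fintype ι] {α : ι → Type*} [∀ i, MeasurableSpace (α i)]
    {μ κ : ∀ i, Measure (α i)} (h : ∀ i, μ i ≤ κ i) : Measure.pi μ ≤ Measure.pi κ := by
  rw [Measure.le_iff]
  intro s hs
  rw [Measure.pi_def, Measure.pi_def, toMeasure_apply _ _ hs, toMeasure_apply _ _ hs]
  have hb : ∀ t : Set (∀ i, α i),
      OuterMeasure.pi (fun i => (μ i).toOuterMeasure) t ≤ piPremeasure (fun i => (κ i).toOuterMeasure) t := by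
    intro t
    refine (OuterMeasure.boundedBy_le t).trans ?_
    unfold piPremeasure
    exact Finset.prod_le_prod' fun i _ => Measure.le_iff'.mp (h i) _
  exact (OuterMeasure.le_boundedBy.mpr hb) s

/-- Pushforward of a density measure on `ℝ` by a translation. -/
lemma rnm_map_withDensity (f : ℝ → ENNReal) (hf : Measurable f) (a : ℝ) :
    Measure.map (fun x : ℝ => x + a) (volume.withDensity f)
      = volume.withDensity (fun x => f (x - a)) := by
  ext s hs
  have hpre : MeasurableSet ((fun x : ℝ => x + a) ⁻¹' s) := hs.preimage (measurable_add_const a)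
  rw [Measure.map_apply (measurable_add_const a) hs, withDensity_apply _ hpre,
    withDensity_apply _ hs, ← lintegral_indicator hs _, ← lintegral_indicator hpre _]
  have hmeas : Measurable (s.indicator fun y => f (y - a)) :=
    (hf.comp (measurable_sub_const a)).indicator hs
  symm
  calc ∫⁻ x, s.indicator (fun y => f (y - a)) x ∂volume
      = ∫⁻ x, s.indicator (fun y => f (y - a)) x ∂(Measure.map (fun x : ℝ => x + a) volume) := by
        rw [map_add_right_eq_self volume a]
    _ = ∫⁻ x, s.indicator (fun y => f (y - a)) (x + a) ∂volume :=
        lintegral_map hmeas (measurable_add_const a)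
    _ = ∫⁻ x, ((fun x : ℝ => x + a) ⁻¹' s).indicator f x ∂volume := by
        congr 1
        funext x
        by_cases hx : x + a ∈ s
        · simp [Set.indicator_apply, hx, Set.mem_preimage]
        · simp [Set.indicator_apply, hx, Set.mem_preimage]

/-- Report Noisy Max is `ε`-differentially private. -/
theorem report_noisy_max_dp (n : ℕ) (hn : 1 ≤ n) (ε : ℝ) (hε : 0 < ε)
    (μ : Measure (Fin n → ℝ))
    (hμ : μ = Measure.pi (fun _ : Fin n => volume.withDensity
      (fun x => ENNReal.ofReal ((ε / 4) * Real.exp (-(ε / 2) * |x|)))))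
    (NM : (Fin n → ℝ) → Fin n → Set (Fin n → ℝ))
    (hNM : ∀ q j, NM q j = {η | (∀ i, q i + η i ≤ q j + η j) ∧
      (∀ i, i < j → q i + η i < q j + η j)})
    (q₁ q₂ : Fin n → ℝ) (hadj : ∀ i, |q₁ i - q₂ i| ≤ 1) (j : Fin n) :
    μ (NM q₁ j) ≤ ENNReal.ofReal (Real.exp ε) * μ (NM q₂ j) := by
  classical
  subst hμ
  set c : ENNReal := ENNReal.ofReal (Real.exp ε) with hc
  set f : ℝ → ENNReal := fun x => ENNReal.ofReal ((ε / 4) * Real.exp (-(ε / 2) * |x|)) with hfdef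
  have hf : Measurable f := by
    apply Measurable.ennreal_ofReal
    exact (((measurable_abs.const_mul (-(ε / 2)))).exp).const_mul (ε / 4)
  set ν : Measure ℝ := volume.withDensity f with hν
  have hσν : SigmaFinite ν := SigmaFinite.withDensity_of_ne_top' fun x => ENNReal.ofReal_ne_top
  set ν₂ : Measure ℝ := volume.withDensity (fun x => f (x - 2)) with hν₂def
  have hσν₂ : SigmaFinite ν₂ := SigmaFinite.withDensity_of_ne_top' fun x => ENNReal.ofReal_ne_top
  have hσcν : SigmaFinite (c • ν) := by
    have : c • ν = volume.withDensity (fun x => c * f x) := by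
      rw [← withDensity_smul' c f (by simp [hc])]
      rfl
    rw [this]
    exact SigmaFinite.withDensity_of_ne_top' fun x =>
      ENNReal.mul_ne_top (by simp [hc]) ENNReal.ofReal_ne_top
  -- pointwise density comparison : f (x - 2) ≤ c * f x
  have hdens : ∀ x : ℝ, f (x - 2) ≤ c * f x := by
    intro x
    have h1 : |x| - |x - 2| ≤ 2 := by
      have h := abs_sub_abs_le_abs_sub x (x - 2)
      have : x - (x - 2) = 2 := by ring
      rw [this] at h
      simpa using h
    have h2 : -(ε / 2) * |x - 2| ≤ ε + -(ε / 2) * |x| := by nlinarith [hε.le]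
    have hreal : (ε / 4) * Real.exp (-(ε / 2) * |x - 2|)
        ≤ Real.exp ε * ((ε / 4) * Real.exp (-(ε / 2) * |x|)) := by
      calc (ε / 4) * Real.exp (-(ε / 2) * |x - 2|)
          ≤ (ε / 4) * Real.exp (ε + -(ε / 2) * |x|) :=
            mul_le_mul_of_nonneg_left (Real.exp_le_exp.mpr h2) (by positivity)
        _ = Real.exp ε * ((ε / 4) * Real.exp (-(ε / 2) * |x|)) := by
            rw [Real.exp_add]; ring
    calc f (x - 2) = ENNReal.ofReal ((ε / 4) * Real.exp (-(ε / 2) * |x - 2|)) := rfl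
      _ ≤ ENNReal.ofReal (Real.exp ε * ((ε / 4) * Real.exp (-(ε / 2) * |x|))) :=
          ENNReal.ofReal_le_ofReal hreal
      _ = c * f x := by
          rw [hc, hfdef, ENNReal.ofReal_mul (Real.exp_nonneg ε)]
  have hν₂_le : ν₂ ≤ c • ν := by
    have h1 : ν₂ ≤ volume.withDensity (fun x => c * f x) :=
      withDensity_mono (Filter.Eventually.of_forall hdens)
    have h2 : volume.withDensity (fun x => c * f x) = c • ν := by
      rw [← withDensity_smul' c f (by simp [hc])]
      rfl
    rw [← h2]; exact h1
  have hν₂_map : Measure.map (fun x : ℝ => x + 2) ν = ν₂ := rnm_map_withDensity f hf 2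
  -- the translation map
  set d : Fin n → ℝ := fun i => if i = j then 2 else 0 with hd
  set T : (Fin n → ℝ) → (Fin n → ℝ) := fun η i => η i + d i with hT
  have hTm : Measurable T := by
    rw [hT]; exact measurable_pi_iff.mpr fun i => by fun_prop
  -- measurability of NM sets
  have hNMmeas : ∀ q : Fin n → ℝ, MeasurableSet (NM q j) := by
    intro q
    rw [hNM]
    have heq : {η : Fin n → ℝ | (∀ i, q i + η i ≤ q j + η j) ∧
        (∀ i, i < j → q i + η i < q j + η j)}
        = (⋂ i, {η : Fin n → ℝ | q i + η i ≤ q j + η j}) ∩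
          ⋂ i, ⋂ _ : i < j, {η : Fin n → ℝ | q i + η i < q j + η j} := by
      ext η
      simp only [Set.mem_setOf_eq, Set.mem_inter_iff, Set.mem_iInter]
    rw [heq]
    have hmi : ∀ i : Fin n, Measurable fun η : Fin n → ℝ => q i + η i :=
      fun i => by fun_prop
    exact (MeasurableSet.iInter fun i => measurableSet_le (hmi i) (hmi j)).inter
      (MeasurableSet.iInter fun i => MeasurableSet.iInter fun _ =>
        measurableSet_lt (hmi i) (hmi j))
  -- the inclusion NM q₁ j ⊆ T ⁻¹' NM q₂ j
  have hsub : NM q₁ j ⊆ T ⁻¹' (NM q₂ j) := by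
    intro η hη
    rw [hNM] at hη
    obtain ⟨h1, h2⟩ := hη
    rw [Set.mem_preimage, hNM]
    have hdj : d j = 2 := by simp [hd]
    constructor
    · intro i
      show q₂ i + (η i + d i) ≤ q₂ j + (η j + d j)
      by_cases hij : i = j
      · subst hij; exact le_refl _
      · have hdi : d i = 0 := by simp [hd, hij]
        have ha1 := abs_le.mp (hadj i)
        have ha2 := abs_le.mp (hadj j)
        have := h1 i
        rw [hdi, hdj]
        linarith [ha1.1, ha1.2, ha2.1, ha2.2]
    · intro i hij
      show q₂ i + (η i + d i) < q₂ j + (η j + d j)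
      have hne : i ≠ j := ne_of_lt hij
      have hdi : d i = 0 := by simp [hd, hne]
      have ha1 := abs_le.mp (hadj i)
      have ha2 := abs_le.mp (hadj j)
      have := h2 i hij
      rw [hdi, hdj]
      linarith [ha1.1, ha1.2, ha2.1, ha2.2]
  -- families of measures
  set κ : Fin n → Measure ℝ := fun i => if i = j then ν₂ else ν with hκ
  set κ' : Fin n → Measure ℝ := fun i => if i = j then c • ν else ν with hκ'
  haveI hκσ : ∀ i, SigmaFinite (κ i) := by
    intro i
    rw [hκ]
    by_cases hij : i = j
    · simpa [hij] using hσν₂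
    · simpa [hij] using hσν
  haveI hκ'σ : ∀ i, SigmaFinite (κ' i) := by
    intro i
    rw [hκ']
    by_cases hij : i = j
    · simpa [hij] using hσcν
    · simpa [hij] using hσν
  -- push forward of μ under T is the product of the κ's
  have hmapT : Measure.map T (Measure.pi fun _ : Fin n => ν) = Measure.pi κ := by
    refine (Measure.pi_eq fun s hs => ?_).symm
    rw [Measure.map_apply hTm (MeasurableSet.pi Set.countable_univ fun i _ => hs i)]
    have hpre : T ⁻¹' Set.pi Set.univ s
        = Set.pi Set.univ (fun i => (fun x : ℝ => x + d i) ⁻¹' s i) := by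
      ext η
      simp [hT, Set.mem_pi]
    rw [hpre, Measure.pi_pi]
    refine Finset.prod_congr rfl fun i _ => ?_
    by_cases hij : i = j
    · subst hij
      have hdi : d i = 2 := by simp [hd]
      rw [hdi]
      have : κ i = ν₂ := by simp [hκ]
      rw [this, ← hν₂_map, Measure.map_apply (measurable_add_const 2) (hs i)]
    · have hdi : d i = 0 := by simp [hd, hij]
      have : κ i = ν := by simp [hκ, hij]
      rw [hdi, this]
      congr 1
      ext x
      simp
  -- Measure.pi κ' = c • Measure.pi ν
  have hpiκ' : Measure.pi κ' = c • Measure.pi (fun _ : Fin n => ν) := by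
    refine Measure.pi_eq fun s hs => ?_
    rw [Measure.smul_apply, Measure.pi_pi, smul_eq_mul]
    have : ∀ i : Fin n, κ' i (s i) = (if i = j then c else 1) * ν (s i) := by
      intro i
      by_cases hij : i = j
      · simp [hκ', hij]
      · simp [hκ', hij]
    calc c * ∏ i, ν (s i)
        = (∏ i : Fin n, if i = j then c else 1) * ∏ i, ν (s i) := by
          rw [Finset.prod_ite_eq' Finset.univ j (fun _ => c)]
          simp
      _ = ∏ i, ((if i = j then c else 1) * ν (s i)) := by
          rw [Finset.prod_mul_distrib]
      _ = ∏ i, κ' i (s i) := Finset.prod_congr rfl fun i _ => (this i).symm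
  -- conclusion
  have hmono : Measure.pi κ ≤ Measure.pi κ' := by
    apply rnm_pi_mono
    intro i
    rw [hκ, hκ']
    by_cases hij : i = j
    · simpa [hij] using hν₂_le
    · simp [hij]
  calc (Measure.pi fun _ : Fin n => ν) (NM q₁ j)
      ≤ (Measure.pi fun _ : Fin n => ν) (T ⁻¹' NM q₂ j) := measure_mono hsub
    _ = Measure.map T (Measure.pi fun _ : Fin n => ν) (NM q₂ j) :=
        (Measure.map_apply hTm (hNMmeas q₂)).symm
    _ = Measure.pi κ (NM q₂ j) := by rw [hmapT]
    _ ≤ Measure.pi κ' (NM q₂ j) := Measure.le_iff'.mp hmono _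
    _ = (c • Measure.pi (fun _ : Fin n => ν)) (NM q₂ j) := by rw [hpiκ']
    _ = c * (Measure.pi fun _ : Fin n => ν) (NM q₂ j) := by
        rw [Measure.smul_apply, smul_eq_mul]
end

section
/- Above Threshold (Sparse Vector Technique with N = 1) is ε-differentially private: let n ≥ 1, ε > 0, T : ℝ. Let Lap(2/ε) be the Borel measure on ℝ with density x ↦ (ε/4)·exp(−(ε/2)·|x|) and Lap(4/ε) the Borel measure on ℝ with density x ↦ (ε/8)·exp(−(ε/4)·|x|), both with respect to Lebesgue measure, and let μ be the product measure of Lap(2/ε) with n independent copies of Lap(4/ε) on ℝ × (Fin n → ℝ). For q : Fin n → ℝ and j : Fin n define AT(q, j) := {(z, η) | q j + η j ≥ T + z ∧ ∀ i, i < j → q i + η i < T + z}, the event that j is the first index whose noisy answer reaches the noisy threshold. Then for all q₁, q₂ : Fin n → ℝ with |q₁ i − q₂ i| ≤ 1 for every i, and every j : Fin n, μ(AT(q₁, j)) ≤ exp(ε) · μ(AT(q₂, j)). -/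
/-!
Write `F(z, η) = f(z) ∏ᵢ g(ηᵢ)` for the density of the joint noise. Shifting the threshold noise
by `1` and the `j`-th query noise by `2` turns the event "`j` is the first index above threshold"
for `q₁` into a subset of the same event for `q₂`: the `j`-th comparison gains `2 - 1 ≥ q₁ⱼ - q₂ⱼ`,
every earlier one gains `1 ≥ q₂ᵢ - q₁ᵢ`. Since Lebesgue measure is translation invariant and the
Laplace densities change by at most `exp(ε/2)` under these shifts, the probability of the event
grows by at most `exp(ε/2) · exp(ε/2) = exp ε`.
-/

open MeasureTheory

namespace MeasureTheory

theorem lintegral_fin_pi_prod {n : ℕ} {α : Type*} [MeasurableSpace α]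
    (μ : Fin n → Measure α) [∀ i, SigmaFinite (μ i)]
    (f : Fin n → α → ENNReal) (hf : ∀ i, Measurable (f i)) :
    ∫⁻ x, ∏ i, f i (x i) ∂Measure.pi μ = ∏ i, ∫⁻ y, f i y ∂μ i := by
  induction n with
  | zero => simp
  | succ n ih =>
    have hsplit := (measurePreserving_piFinSuccAbove μ 0).symm
    rw [← hsplit.lintegral_comp (by fun_prop)]
    simp_rw [MeasurableEquiv.piFinSuccAbove_symm_apply, Fin.insertNthEquiv, Equiv.coe_fn_mk,
      Fin.insertNth_zero, Fin.prod_univ_succ, Fin.zero_succAbove, cast_eq, Fin.cons_zero,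
      Fin.cons_succ]
    rw [lintegral_prod_mul (f := f 0) (g := fun x : Fin n → α => ∏ i, f i.succ (x i))
      (hf 0).aemeasurable
      (Finset.measurable_prod _ fun i _ => (hf _).comp (measurable_pi_apply i)).aemeasurable,
      ih (fun i => μ i.succ) (fun i => f i.succ) (fun i => hf i.succ)]

theorem Measure.pi_withDensity {n : ℕ} {α : Type*} [MeasurableSpace α]
    (μ : Fin n → Measure α) [∀ i, SigmaFinite (μ i)]
    (f : Fin n → α → ENNReal) (hf : ∀ i, Measurable (f i)) (hf_ne_top : ∀ i x, f i x ≠ ⊤) :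
    Measure.pi (fun i => (μ i).withDensity (f i)) =
      (Measure.pi μ).withDensity (fun x => ∏ i, f i (x i)) := by
  have : ∀ i, SigmaFinite ((μ i).withDensity (f i)) := fun i =>
    SigmaFinite.withDensity_of_ne_top' (hf_ne_top i)
  refine Measure.pi_eq fun s hs => ?_
  have hind : (Set.univ.pi s).indicator (fun x => ∏ i, f i (x i)) =
      fun x => ∏ i, (s i).indicator (f i) (x i) := by
    classical
    ext x
    simp only [Set.indicator_apply, Set.mem_univ_pi, Finset.prod_ite_zero, Finset.mem_univ,
      true_imp_iff]
  rw [withDensity_apply _ (MeasurableSet.univ_pi hs),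
    ← lintegral_indicator (MeasurableSet.univ_pi hs), hind,
    lintegral_fin_pi_prod μ _ fun i => (hf i).indicator (hs i)]
  simp_rw [lintegral_indicator (hs _), withDensity_apply _ (hs _)]

theorem withDensity_apply_le_mul_of_measurePreserving {α : Type*} [MeasurableSpace α]
    {ν : Measure α} {f : α → ENNReal} {τ : α → α} {C : ENNReal} {s t : Set α}
    (hτ : MeasurePreserving τ ν ν) (hf : Measurable f) (hfτ : ∀ x, f x ≤ C * f (τ x))
    (ht : MeasurableSet t) (hst : s ⊆ τ ⁻¹' t) :
    ν.withDensity f s ≤ C * ν.withDensity f t := by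
  have hτt : MeasurableSet (τ ⁻¹' t) := hτ.measurable ht
  calc ν.withDensity f s ≤ ν.withDensity f (τ ⁻¹' t) := measure_mono hst
    _ = ∫⁻ x in τ ⁻¹' t, f x ∂ν := withDensity_apply _ hτt
    _ ≤ ∫⁻ x in τ ⁻¹' t, C * f (τ x) ∂ν := lintegral_mono fun x => hfτ x
    _ = C * ∫⁻ x in τ ⁻¹' t, f (τ x) ∂ν := lintegral_const_mul _ (hf.comp hτ.measurable)
    _ = C * ν.withDensity f t := by rw [hτ.setLIntegral_comp_preimage ht hf, withDensity_apply _ ht]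

end MeasureTheory

theorem ofReal_mul_exp_neg_mul_abs_le {a : ℝ} (c : ℝ) (ha : 0 ≤ a) (hc : 0 ≤ c) (x t : ℝ) :
    ENNReal.ofReal (c * Real.exp (-a * |x|)) ≤
      ENNReal.ofReal (Real.exp (a * |t|)) * ENNReal.ofReal (c * Real.exp (-a * |x + t|)) := by
  rw [← ENNReal.ofReal_mul (Real.exp_nonneg _)]
  refine ENNReal.ofReal_le_ofReal ?_
  have hexp : Real.exp (-a * |x|) ≤ Real.exp (a * |t|) * Real.exp (-a * |x + t|) := by
    rw [← Real.exp_add]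
    exact Real.exp_le_exp.mpr (by nlinarith [abs_add_le x t])
  calc c * Real.exp (-a * |x|) ≤ c * (Real.exp (a * |t|) * Real.exp (-a * |x + t|)) := by gcongr
    _ = Real.exp (a * |t|) * (c * Real.exp (-a * |x + t|)) := by ring

theorem prod_le_mul_prod_add_single {ι α : Type*} [Fintype ι] [DecidableEq ι] [AddZeroClass α]
    {g : α → ENNReal} {C : ENNReal} {j : ι} {t : α} (hg : ∀ y, g y ≤ C * g (y + t))
    (x : ι → α) : ∏ i, g (x i) ≤ C * ∏ i, g ((x + Pi.single j t : ι → α) i) := by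
  rw [Fintype.prod_eq_mul_prod_compl j, Fintype.prod_eq_mul_prod_compl j, ← mul_assoc]
  have hrest : ∀ i ∈ ({j}ᶜ : Finset ι), g ((x + Pi.single j t : ι → α) i) = g (x i) :=
    fun i hi => by rw [Pi.add_apply, Pi.single_eq_of_ne (by simpa using hi : i ≠ j), add_zero]
  rw [Finset.prod_congr rfl hrest, Pi.add_apply, Pi.single_eq_same]
  gcongr
  exact hg (x j)

def firstAboveThreshold {ι : Type*} [Preorder ι] (T : ℝ) (q : ι → ℝ) (j : ι) :
    Set (ℝ × (ι → ℝ)) :=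
  {p | q j + p.2 j ≥ T + p.1 ∧ ∀ i, i < j → q i + p.2 i < T + p.1}

theorem measurableSet_firstAboveThreshold {ι : Type*} [Preorder ι] [Countable ι] (T : ℝ)
    (q : ι → ℝ) (j : ι) : MeasurableSet (firstAboveThreshold T q j) := by
  simp only [firstAboveThreshold, Set.ofPred_and, Set.ofPred_forall]
  exact (measurableSet_le (by fun_prop) (by fun_prop)).inter
    (.iInter fun i => .iInter fun _ => measurableSet_lt (by fun_prop) (by fun_prop))

theorem firstAboveThreshold_subset_preimage_add {ι : Type*} [Preorder ι] [DecidableEq ι]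
    {T : ℝ} {q₁ q₂ : ι → ℝ} (hadj : ∀ i, |q₁ i - q₂ i| ≤ 1) (j : ι) :
    firstAboveThreshold T q₁ j ⊆
      (· + ((1 : ℝ), Pi.single j (2 : ℝ))) ⁻¹' firstAboveThreshold T q₂ j := by
  rintro ⟨z, η⟩ ⟨hj, hbefore⟩
  refine ⟨?_, fun i hij => ?_⟩
  · have := abs_le.mp (hadj j)
    simp only [Prod.snd_add, Prod.fst_add, Pi.add_apply, Pi.single_eq_same] at hj ⊢
    linarith
  · have := abs_le.mp (hadj i)
    have := hbefore i hij
    simp only [Prod.snd_add, Prod.fst_add, Pi.add_apply, Pi.single_eq_of_ne hij.ne] at this ⊢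
    linarith

theorem above_threshold_dp_general (n : ℕ) (ε : ℝ) (hε : 0 < ε) (T : ℝ)
    (μ : Measure (ℝ × (Fin n → ℝ)))
    (hμ : μ = (volume.withDensity
        (fun x => ENNReal.ofReal ((ε / 4) * Real.exp (-(ε / 2) * |x|)))).prod
      (Measure.pi (fun _ : Fin n => volume.withDensity
        (fun x => ENNReal.ofReal ((ε / 8) * Real.exp (-(ε / 4) * |x|))))))
    (AT : (Fin n → ℝ) → Fin n → Set (ℝ × (Fin n → ℝ)))
    (hAT : ∀ q j, AT q j = {p : ℝ × (Fin n → ℝ) |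
      q j + p.2 j ≥ T + p.1 ∧ ∀ i, i < j → q i + p.2 i < T + p.1})
    (q₁ q₂ : Fin n → ℝ) (hadj : ∀ i, |q₁ i - q₂ i| ≤ 1) (j : Fin n) :
    μ (AT q₁ j) ≤ ENNReal.ofReal (Real.exp ε) * μ (AT q₂ j) := by
  set f : ℝ → ENNReal := fun x => ENNReal.ofReal ((ε / 4) * Real.exp (-(ε / 2) * |x|))
  set g : ℝ → ENNReal := fun x => ENNReal.ofReal ((ε / 8) * Real.exp (-(ε / 4) * |x|))
  have hμF : μ = volume.withDensity (fun p : ℝ × (Fin n → ℝ) => f p.1 * ∏ i, g (p.2 i)) := by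
    rw [hμ, Measure.pi_withDensity _ (fun _ => g) (fun _ => by fun_prop)
      (fun _ _ => ENNReal.ofReal_ne_top), prod_withDensity (by fun_prop) (by fun_prop),
      ← volume_pi, ← Measure.volume_eq_prod]
  have hshift : MeasurePreserving (· + ((1 : ℝ), Pi.single j (2 : ℝ)))
      (volume : Measure (ℝ × (Fin n → ℝ))) volume := by
    rw [Measure.volume_eq_prod]
    exact (measurePreserving_add_right _ _).prod (measurePreserving_add_right _ _)
  have hexp : ENNReal.ofReal (Real.exp ε) =
      ENNReal.ofReal (Real.exp (ε / 2 * |1|)) * ENNReal.ofReal (Real.exp (ε / 4 * |2|)) := by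
    rw [← ENNReal.ofReal_mul (Real.exp_nonneg _), ← Real.exp_add, abs_one, abs_two]
    ring_nf
  have hdensity : ∀ p : ℝ × (Fin n → ℝ), f p.1 * ∏ i, g (p.2 i) ≤ ENNReal.ofReal (Real.exp ε) *
      (f (p.1 + 1) * ∏ i, g ((p.2 + Pi.single j 2 : Fin n → ℝ) i)) := fun p => by
    rw [hexp, mul_mul_mul_comm]
    exact mul_le_mul' (ofReal_mul_exp_neg_mul_abs_le _ (by positivity) (by positivity) _ _)
      (prod_le_mul_prod_add_single
        (ofReal_mul_exp_neg_mul_abs_le _ (by positivity) (by positivity) · _) p.2)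
  rw [hμF, hAT, hAT]
  exact withDensity_apply_le_mul_of_measurePreserving hshift (by fun_prop) hdensity
    (measurableSet_firstAboveThreshold T q₂ j) (firstAboveThreshold_subset_preimage_add hadj j)

/-- Above Threshold (Sparse Vector Technique with `N = 1`) is `ε`-differentially private. -/
theorem above_threshold_dp (n : ℕ) (hn : 1 ≤ n) (ε : ℝ) (hε : 0 < ε) (T : ℝ)
    (μ : Measure (ℝ × (Fin n → ℝ)))
    (hμ : μ = (volume.withDensity
        (fun x => ENNReal.ofReal ((ε / 4) * Real.exp (-(ε / 2) * |x|)))).prod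
      (Measure.pi (fun _ : Fin n => volume.withDensity
        (fun x => ENNReal.ofReal ((ε / 8) * Real.exp (-(ε / 4) * |x|))))))
    (AT : (Fin n → ℝ) → Fin n → Set (ℝ × (Fin n → ℝ)))
    (hAT : ∀ q j, AT q j = {p : ℝ × (Fin n → ℝ) |
      q j + p.2 j ≥ T + p.1 ∧ ∀ i, i < j → q i + p.2 i < T + p.1})
    (q₁ q₂ : Fin n → ℝ) (hadj : ∀ i, |q₁ i - q₂ i| ≤ 1) (j : Fin n) :
    μ (AT q₁ j) ≤ ENNReal.ofReal (Real.exp ε) * μ (AT q₂ j) :=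
  above_threshold_dp_general n ε hε T μ hμ AT hAT q₁ q₂ hadj j
end

section
/- The Partial Sum algorithm is ε-differentially private: let ε > 0 and let Lap(1/ε) be the Borel measure on ℝ with density x ↦ (ε/2)·exp(−ε·|x|) with respect to Lebesgue measure. For all n and all q₁, q₂ : Fin n → ℝ such that there exists an index j with q₁ i = q₂ i for all i ≠ j and |q₁ j − q₂ j| ≤ 1, and for every measurable set E ⊆ ℝ, Lap(1/ε){η | (∑ i, q₁ i) + η ∈ E} ≤ exp(ε) · Lap(1/ε){η | (∑ i, q₂ i) + η ∈ E}. -/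
/-!
Adjacent query vectors have sums differing by some `t` with `|t| ≤ 1`, so the event for `q₁`
is the event for `q₂` translated by `t`. By translation invariance of Lebesgue measure it then
suffices to compare the Laplace density with its translate, and the triangle inequality gives
`exp (-ε |y - t|) ≤ exp (ε |t|) * exp (-ε |y|)`.
-/

open MeasureTheory
open scoped ENNReal

theorem Finset.sum_sub_sum_eq_of_forall_ne_eq {ι M : Type*} [Fintype ι] [AddCommGroup M]
    {f g : ι → M} {j : ι} (h : ∀ i, i ≠ j → f i = g i) :
    ∑ i, f i - ∑ i, g i = f j - g j := by
  rw [← Finset.sum_sub_distrib]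
  exact Finset.sum_eq_single j (fun i _ hi => by rw [h i hi, sub_self]) (by simp)

theorem Real.exp_neg_mul_abs_sub_le {ε : ℝ} (hε : 0 ≤ ε) (y t : ℝ) :
    Real.exp (-ε * |y - t|) ≤ Real.exp (ε * |t|) * Real.exp (-ε * |y|) := by
  rw [← Real.exp_add, Real.exp_le_exp]
  nlinarith [abs_sub_abs_le_abs_sub y t, abs_sub y t]

theorem laplace_density_sub_le {ε t : ℝ} (hε : 0 ≤ ε) (ht : |t| ≤ 1) (y : ℝ) :
    ENNReal.ofReal (ε / 2 * Real.exp (-ε * |y - t|)) ≤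
      ENNReal.ofReal (Real.exp ε) * ENNReal.ofReal (ε / 2 * Real.exp (-ε * |y|)) := by
  rw [← ENNReal.ofReal_mul (Real.exp_nonneg ε)]
  refine ENNReal.ofReal_le_ofReal ?_
  calc ε / 2 * Real.exp (-ε * |y - t|)
      ≤ ε / 2 * (Real.exp (ε * |t|) * Real.exp (-ε * |y|)) := by
        gcongr; exact Real.exp_neg_mul_abs_sub_le hε y t
    _ ≤ Real.exp ε * (ε / 2 * Real.exp (-ε * |y|)) := by
        rw [mul_left_comm]
        gcongr
        nlinarith

theorem MeasureTheory.withDensity_preimage_add_right_le {G : Type*} [MeasurableSpace G]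
    [AddGroup G] [MeasurableAdd G] (ν : Measure G) [ν.IsAddRightInvariant] {f : G → ℝ≥0∞}
    (hf : Measurable f) {c : ℝ≥0∞} {t : G} (hft : ∀ y, f (y - t) ≤ c * f y)
    {s : Set G} (hs : MeasurableSet s) :
    ν.withDensity f ((· + t) ⁻¹' s) ≤ c * ν.withDensity f s := by
  have hs' : MeasurableSet ((· + t) ⁻¹' s) := measurable_add_const t hs
  rw [withDensity_apply _ hs', withDensity_apply _ hs, ← lintegral_indicator hs',
    ← lintegral_indicator hs, ← lintegral_const_mul _ (hf.indicator hs)]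
  calc ∫⁻ x, ((· + t) ⁻¹' s).indicator f x ∂ν
      = ∫⁻ x, s.indicator (fun y => f (y - t)) (x + t) ∂ν := by
        refine lintegral_congr fun x => ?_
        rw [← Set.indicator_comp_right (· + t)]
        simp [Function.comp_def]
    _ = ∫⁻ x, s.indicator (fun y => f (y - t)) x ∂ν := lintegral_add_right_eq_self _ t
    _ ≤ ∫⁻ x, c * s.indicator f x ∂ν := by
        refine lintegral_mono fun x => ?_
        rw [← Set.indicator_const_mul]
        exact Set.indicator_le_indicator (hft x)

/-- The Partial Sum algorithm is `ε`-differentially private. -/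
theorem partial_sum_dp (ε : ℝ) (hε : 0 < ε)
    (Lap : Measure ℝ)
    (hLap : Lap = volume.withDensity
      (fun x => ENNReal.ofReal ((ε / 2) * Real.exp (-ε * |x|))))
    (n : ℕ) (q₁ q₂ : Fin n → ℝ)
    (hadj : ∃ j, (∀ i, i ≠ j → q₁ i = q₂ i) ∧ |q₁ j - q₂ j| ≤ 1)
    (E : Set ℝ) (hE : MeasurableSet E) :
    Lap {η | (∑ i, q₁ i) + η ∈ E} ≤
      ENNReal.ofReal (Real.exp ε) * Lap {η | (∑ i, q₂ i) + η ∈ E} := by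
  obtain ⟨j, hagree, hj⟩ := hadj
  set t := ∑ i, q₁ i - ∑ i, q₂ i
  have ht : |t| ≤ 1 := (congrArg abs (Finset.sum_sub_sum_eq_of_forall_ne_eq hagree)).trans_le hj
  have hshift : {η | (∑ i, q₁ i) + η ∈ E} = (· + t) ⁻¹' {η | (∑ i, q₂ i) + η ∈ E} := by
    ext η
    simp only [Set.mem_ofPred_eq, Set.mem_preimage, t]
    ring_nf
  have hdensity : Measurable fun x : ℝ => ENNReal.ofReal ((ε / 2) * Real.exp (-ε * |x|)) := by
    fun_prop
  rw [hshift, hLap]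
  exact withDensity_preimage_add_right_le volume hdensity (laplace_density_sub_le hε.le ht)
    (measurable_const_add _ hE)
end

section
/- Gap Sparse Vector Technique (with N = 1) is ε-differentially private: let n ≥ 1, ε > 0, T : ℝ. Let Lap(2/ε) be the Borel measure on ℝ with density x ↦ (ε/4)·exp(−(ε/2)·|x|) and Lap(4/ε) the Borel measure on ℝ with density x ↦ (ε/8)·exp(−(ε/4)·|x|), both with respect to Lebesgue measure, and let μ be the product measure of Lap(2/ε) with n independent copies of Lap(4/ε) on ℝ × (Fin n → ℝ). For q : Fin n → ℝ, j : Fin n, and a measurable set G ⊆ ℝ, define GapAT(q, j, G) := {(z, η) | (∀ i, i < j → q i + η i < T + z) ∧ q j + η j ≥ T + z ∧ (q j + η j − (T + z)) ∈ G}. Then for all q₁, q₂ : Fin n → ℝ with |q₁ i − q₂ i| ≤ 1 for every i, every j : Fin n, and every measurable G ⊆ ℝ, μ(GapAT(q₁, j, G)) ≤ exp(ε) · μ(GapAT(q₂, j, G)). -/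
/-! Raising the threshold noise by `1` and the noise of query `j` by `q₁ j - q₂ j + 1` maps the
event for `q₁` into the event for `q₂`: the threshold rises at least as much as any earlier noisy
answer, so those comparisons still fail, while the `j`-th noisy answer and the threshold move
together, so the released gap is unchanged. Translating a Laplace density of rate `k` by `c`
costs at most a factor `exp (k |c|)`, so the shift costs `exp (ε/2 · 1 + ε/4 · 2) = exp ε`. -/

open MeasureTheory ENNReal NNReal

namespace MeasureTheory.Measure

section Pi

variable {ι : Type*} [Fintype ι]

theorem pi_mono {α : ι → Type*} [∀ i, MeasurableSpace (α i)] {μ ν : ∀ i, Measure (α i)}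
    (h : ∀ i, μ i ≤ ν i) : Measure.pi μ ≤ Measure.pi ν := by
  refine Measure.le_iff.2 fun s hs => ?_
  simp only [Measure.pi_def, toMeasure_apply _ _ hs]
  refine OuterMeasure.le_pi.2 (fun t _ => ?_) s
  exact (OuterMeasure.pi_pi_le _ t).trans (Finset.prod_le_prod' fun i _ => h i (t i))

theorem pi_smul {α : ι → Type*} [∀ i, MeasurableSpace (α i)] {μ : ∀ i, Measure (α i)}
    [∀ i, SigmaFinite (μ i)] (c : ι → ℝ≥0) :
    Measure.pi (fun i => c i • μ i) = (∏ i, c i) • Measure.pi μ := by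
  refine pi_eq fun s hs => ?_
  simp only [smul_apply, pi_pi, ENNReal.smul_def, smul_eq_mul, ENNReal.ofNNReal_finsetProd,
    Finset.prod_mul_distrib]

end Pi

section Translation

variable {G : Type*} [MeasurableSpace G] [AddGroup G] [MeasurableAdd G]

theorem map_add_right_withDensity_le (μ : Measure G) [μ.IsAddRightInvariant] {f : G → ℝ≥0∞}
    (hf : Measurable f) (c : G) (C : ℝ≥0∞) (h : ∀ x, f (x - c) ≤ C * f x) :
    (μ.withDensity f).map (· + c) ≤ C • μ.withDensity f := by
  refine Measure.le_iff.2 fun s hs => ?_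
  rw [map_apply (measurable_add_const c) hs, withDensity_apply _ (measurable_add_const c hs),
    smul_apply, withDensity_apply _ hs, smul_eq_mul, ← lintegral_const_mul _ hf]
  calc ∫⁻ x in (· + c) ⁻¹' s, f x ∂μ = ∫⁻ y in s, f (y - c) ∂μ := by
        simpa using (measurePreserving_add_right μ c).setLIntegral_comp_preimage_emb
          (measurableEmbedding_addRight c) (fun y => f (y - c)) s
    _ ≤ ∫⁻ y in s, C * f y ∂μ := lintegral_mono fun y => h y

variable {ι : Type*} [Fintype ι]

theorem pi_map_add_le {ν : ι → Measure G} [∀ i, SigmaFinite (ν i)] (v : ι → G) (C : ι → ℝ≥0)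
    (h : ∀ i, (ν i).map (· + v i) ≤ C i • ν i) :
    (Measure.pi ν).map (· + v) ≤ (∏ i, C i) • Measure.pi ν := by
  have (i : ι) : SigmaFinite ((ν i).map (· + v i)) :=
    (measurableEmbedding_addRight (v i)).sigmaFinite_map
  calc (Measure.pi ν).map (· + v) = Measure.pi fun i => (ν i).map (· + v i) :=
        pi_map_pi fun i => (measurable_add_const (v i)).aemeasurable
    _ ≤ Measure.pi fun i => C i • ν i := pi_mono h
    _ = (∏ i, C i) • Measure.pi ν := pi_smul C

theorem pi_map_add_single_le [DecidableEq ι] (ν : Measure G) [SigmaFinite ν] (j : ι) (c : G)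
    (C : ℝ≥0) (h : ν.map (· + c) ≤ C • ν) :
    (Measure.pi fun _ : ι => ν).map (· + Pi.single j c) ≤ C • Measure.pi fun _ : ι => ν := by
  calc (Measure.pi fun _ : ι => ν).map (· + Pi.single j c)
      ≤ (∏ i, Function.update (1 : ι → ℝ≥0) j C i) • Measure.pi fun _ : ι => ν :=
        pi_map_add_le _ _ fun i => ?_
    _ = C • Measure.pi fun _ : ι => ν := by simp [Finset.prod_update_of_mem]
  rcases eq_or_ne i j with rfl | hij
  · simpa using h
  · simp [hij]

theorem prod_map_add_le {H : Type*} [MeasurableSpace H] [AddGroup H] [MeasurableAdd H]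
    (μ : Measure G) (ν : Measure H) [SFinite μ] [SFinite ν] (a : G) (b : H) (C D : ℝ≥0∞)
    (hμ : μ.map (· + a) ≤ C • μ) (hν : ν.map (· + b) ≤ D • ν) :
    (μ.prod ν).map (· + (a, b)) ≤ (C * D) • μ.prod ν := by
  calc (μ.prod ν).map (· + (a, b)) = (μ.map (· + a)).prod (ν.map (· + b)) :=
        (map_prod_map μ ν (measurable_add_const a) (measurable_add_const b)).symm
    _ ≤ (C • μ).prod (D • ν) := prod_mono hμ hν
    _ = (C * D) • μ.prod ν := by rw [prod_smul_left, prod_smul_right, smul_smul]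

end Translation

end MeasureTheory.Measure

theorem laplace_map_add_le (a k c : ℝ) (ha : 0 ≤ a) (hk : 0 ≤ k) :
    (volume.withDensity fun x => ENNReal.ofReal (a * Real.exp (-k * |x|))).map (· + c) ≤
      ENNReal.ofReal (Real.exp (k * |c|)) •
        volume.withDensity fun x => ENNReal.ofReal (a * Real.exp (-k * |x|)) := by
  refine Measure.map_add_right_withDensity_le _ (by fun_prop) c _ fun x => ?_
  rw [← ENNReal.ofReal_mul (Real.exp_nonneg _)]
  refine ENNReal.ofReal_le_ofReal ?_
  have : -k * |x - c| ≤ k * |c| + -k * |x| := by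
    nlinarith [abs_sub_abs_le_abs_sub x c]
  calc a * Real.exp (-k * |x - c|) ≤ a * Real.exp (k * |c| + -k * |x|) := by gcongr
    _ = Real.exp (k * |c|) * (a * Real.exp (-k * |x|)) := by rw [Real.exp_add]; ring

def gapEvent {n : ℕ} (T : ℝ) (q : Fin n → ℝ) (j : Fin n) (G : Set ℝ) : Set (ℝ × (Fin n → ℝ)) :=
  {p | (∀ i, i < j → q i + p.2 i < T + p.1) ∧ q j + p.2 j ≥ T + p.1 ∧
    (q j + p.2 j - (T + p.1)) ∈ G}

theorem gapEvent_subset_preimage_add {n : ℕ} (T : ℝ) {q₁ q₂ : Fin n → ℝ}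
    (hq : ∀ i, q₂ i ≤ q₁ i + 1) (j : Fin n) (G : Set ℝ) :
    gapEvent T q₁ j G ⊆ (· + (1, Pi.single j (q₁ j - q₂ j + 1))) ⁻¹' gapEvent T q₂ j G := by
  rintro ⟨z, η⟩ ⟨hbelow, habove, hgap⟩
  refine ⟨fun i hij => ?_, ?_, ?_⟩
  · simp only [Prod.snd_add, Prod.fst_add, Pi.add_apply, Pi.single_eq_of_ne hij.ne, add_zero]
    linarith [hbelow i hij, hq i]
  · simp only [Prod.snd_add, Prod.fst_add, Pi.add_apply, Pi.single_eq_same] at habove ⊢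
    linarith
  · convert hgap using 1
    simp only [Prod.snd_add, Prod.fst_add, Pi.add_apply, Pi.single_eq_same]
    ring

theorem gap_svt_dp_general (n : ℕ) (ε : ℝ) (hε : 0 < ε) (T : ℝ)
    (μ : Measure (ℝ × (Fin n → ℝ)))
    (hμ : μ = (volume.withDensity
        (fun x => ENNReal.ofReal ((ε / 4) * Real.exp (-(ε / 2) * |x|)))).prod
      (Measure.pi (fun _ : Fin n => volume.withDensity
        (fun x => ENNReal.ofReal ((ε / 8) * Real.exp (-(ε / 4) * |x|))))))
    (GapAT : (Fin n → ℝ) → Fin n → Set ℝ → Set (ℝ × (Fin n → ℝ)))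
    (hGapAT : ∀ q j G, GapAT q j G = {p : ℝ × (Fin n → ℝ) |
      (∀ i, i < j → q i + p.2 i < T + p.1) ∧ q j + p.2 j ≥ T + p.1 ∧
        (q j + p.2 j - (T + p.1)) ∈ G})
    (q₁ q₂ : Fin n → ℝ) (hadj : ∀ i, |q₁ i - q₂ i| ≤ 1) (j : Fin n)
    (G : Set ℝ) :
    μ (GapAT q₁ j G) ≤ ENNReal.ofReal (Real.exp ε) * μ (GapAT q₂ j G) := by
  set c := q₁ j - q₂ j + 1
  have hc : |c| ≤ 2 := (abs_add_le _ _).trans (by rw [abs_one]; linarith [hadj j])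
  have hshift : μ.map (· + (1, Pi.single j c)) ≤ ENNReal.ofReal (Real.exp ε) • μ := by
    subst hμ
    refine (Measure.prod_map_add_le _ _ _ _ _ _
      (laplace_map_add_le _ _ 1 (by positivity) (by positivity))
      (Measure.pi_map_add_single_le _ j c _
        (laplace_map_add_le _ _ c (by positivity) (by positivity)))).trans ?_
    refine Measure.le_iff'.2 fun s => ?_
    simp only [Measure.smul_apply, smul_eq_mul]
    gcongr
    change ENNReal.ofReal _ * ENNReal.ofReal _ ≤ _
    rw [← ENNReal.ofReal_mul (Real.exp_nonneg _), ← Real.exp_add, abs_one]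
    gcongr
    nlinarith
  have hsub : GapAT q₁ j G ⊆ (· + (1, Pi.single j c)) ⁻¹' GapAT q₂ j G := by
    rw [hGapAT, hGapAT]
    exact gapEvent_subset_preimage_add T (fun i => by linarith [abs_le.1 (hadj i)]) j G
  calc μ (GapAT q₁ j G) ≤ μ ((· + (1, Pi.single j c)) ⁻¹' GapAT q₂ j G) := measure_mono hsub
    _ ≤ μ.map (· + (1, Pi.single j c)) (GapAT q₂ j G) := Measure.le_map_apply (by fun_prop) _
    _ ≤ ENNReal.ofReal (Real.exp ε) * μ (GapAT q₂ j G) := hshift _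

/-- Gap Sparse Vector Technique (with `N = 1`) is `ε`-differentially private. -/
theorem gap_svt_dp (n : ℕ) (hn : 1 ≤ n) (ε : ℝ) (hε : 0 < ε) (T : ℝ)
    (μ : Measure (ℝ × (Fin n → ℝ)))
    (hμ : μ = (volume.withDensity
        (fun x => ENNReal.ofReal ((ε / 4) * Real.exp (-(ε / 2) * |x|)))).prod
      (Measure.pi (fun _ : Fin n => volume.withDensity
        (fun x => ENNReal.ofReal ((ε / 8) * Real.exp (-(ε / 4) * |x|))))))
    (GapAT : (Fin n → ℝ) → Fin n → Set ℝ → Set (ℝ × (Fin n → ℝ)))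
    (hGapAT : ∀ q j G, GapAT q j G = {p : ℝ × (Fin n → ℝ) |
      (∀ i, i < j → q i + p.2 i < T + p.1) ∧ q j + p.2 j ≥ T + p.1 ∧
        (q j + p.2 j - (T + p.1)) ∈ G})
    (q₁ q₂ : Fin n → ℝ) (hadj : ∀ i, |q₁ i - q₂ i| ≤ 1) (j : Fin n)
    (G : Set ℝ) (hG : MeasurableSet G) :
    μ (GapAT q₁ j G) ≤ ENNReal.ofReal (Real.exp ε) * μ (GapAT q₂ j G) :=
  gap_svt_dp_general n ε hε T μ hμ GapAT hGapAT q₁ q₂ hadj j G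
end

section
/- Numerical Sparse Vector Technique (with N = 1) is ε-differentially private: let n ≥ 1, ε > 0, T : ℝ. Let Lap(3/ε), Lap(6/ε), and again Lap(3/ε) be the Borel measures on ℝ with densities x ↦ (ε/6)·exp(−(ε/3)·|x|), x ↦ (ε/12)·exp(−(ε/6)·|x|), and x ↦ (ε/6)·exp(−(ε/3)·|x|) respectively, all with respect to Lebesgue measure, and let μ be the product measure of Lap(3/ε), n independent copies of Lap(6/ε), and Lap(3/ε), on ℝ × (Fin n → ℝ) × ℝ. For q : Fin n → ℝ, j : Fin n, and a measurable set G ⊆ ℝ, define NumAT(q, j, G) := {(z, η, w) | (∀ i, i < j → q i + η i < T + z) ∧ q j + η j ≥ T + z ∧ (q j + w) ∈ G}. Then for all q₁, q₂ : Fin n → ℝ with |q₁ i − q₂ i| ≤ 1 for every i, every j : Fin n, and every measurable G ⊆ ℝ, μ(NumAT(q₁, j, G)) ≤ exp(ε) · μ(NumAT(q₂, j, G)). -/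
open MeasureTheory
open scoped ENNReal NNReal

section Aux

/-- The (unnormalized) Laplace-type density is measurable. -/
lemma lapDensity_measurable (c b : ℝ) :
    Measurable fun x : ℝ => ENNReal.ofReal (c * Real.exp (-b * |x|)) := by
  have hcont : Continuous fun x : ℝ => c * Real.exp (-b * |x|) := by continuity
  exact hcont.measurable.ennreal_ofReal

/-- The Laplace-type measure is sigma-finite. -/
lemma lapMeasure_sigmaFinite (c b : ℝ) (hc : 0 ≤ c) (hb : 0 ≤ b) :
    SigmaFinite (volume.withDensity fun x : ℝ => ENNReal.ofReal (c * Real.exp (-b * |x|))) := by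
  have hle : (volume.withDensity fun x : ℝ => ENNReal.ofReal (c * Real.exp (-b * |x|)))
      ≤ volume.withDensity (fun _ : ℝ => ENNReal.ofReal c) := by
    refine withDensity_mono (Filter.Eventually.of_forall fun x => ?_)
    refine ENNReal.ofReal_le_ofReal ?_
    have h1 : Real.exp (-b * |x|) ≤ 1 := by
      rw [Real.exp_le_one_iff]
      have := abs_nonneg x
      nlinarith
    nlinarith [Real.exp_pos (-b * |x|)]
  rw [withDensity_const] at hle
  have heq : (ENNReal.ofReal c) • (volume : Measure ℝ)
      = (c.toNNReal : ℝ≥0) • (volume : Measure ℝ) := by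
    ext s hs
    rfl
  rw [heq] at hle
  exact Measure.sigmaFinite_of_le _ hle

/-- Key pointwise bound for the shifted Laplace density. -/
lemma lapDensity_shift_le {c b : ℝ} (hc : 0 ≤ c) (hb : 0 ≤ b) {t s : ℝ} (hts : |t| ≤ s)
    (x : ℝ) :
    ENNReal.ofReal (c * Real.exp (-b * |x - t|))
      ≤ ENNReal.ofReal (Real.exp (b * s)) * ENNReal.ofReal (c * Real.exp (-b * |x|)) := by
  rw [← ENNReal.ofReal_mul (Real.exp_nonneg _)]
  refine ENNReal.ofReal_le_ofReal ?_
  have h1 : |x| - |x - t| ≤ |t| := by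
    have := abs_sub_abs_le_abs_sub x (x - t)
    simpa using this
  have h2 : b * (|x| - |x - t|) ≤ b * s :=
    mul_le_mul_of_nonneg_left (h1.trans hts) hb
  have h3 : Real.exp (-b * |x - t|) ≤ Real.exp (b * s + -b * |x|) := by
    rw [Real.exp_le_exp]; nlinarith
  calc c * Real.exp (-b * |x - t|) ≤ c * Real.exp (b * s + -b * |x|) :=
        mul_le_mul_of_nonneg_left h3 hc
    _ = Real.exp (b * s) * (c * Real.exp (-b * |x|)) := by
        rw [Real.exp_add]; ring

/-- Shift inequality for lower integrals against the Laplace-type measure. -/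
lemma lap_shift_lintegral {c b : ℝ} (hc : 0 ≤ c) (hb : 0 ≤ b) (t s : ℝ) (hts : |t| ≤ s)
    (φ : ℝ → ℝ≥0∞) (hφ : Measurable φ) :
    ∫⁻ x, φ (x + t) ∂(volume.withDensity fun x : ℝ => ENNReal.ofReal (c * Real.exp (-b * |x|)))
      ≤ ENNReal.ofReal (Real.exp (b * s)) *
        ∫⁻ x, φ x ∂(volume.withDensity fun x : ℝ => ENNReal.ofReal (c * Real.exp (-b * |x|))) := by
  have hd := lapDensity_measurable c b
  have hφt : Measurable fun x : ℝ => φ (x + t) := hφ.comp (measurable_add_const t)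
  rw [lintegral_withDensity_eq_lintegral_mul _ hd hφt,
      lintegral_withDensity_eq_lintegral_mul _ hd hφ]
  have step : ∫⁻ x, ((fun x : ℝ => ENNReal.ofReal (c * Real.exp (-b * |x|))) *
        fun x => φ (x + t)) x ∂volume
      = ∫⁻ x, ENNReal.ofReal (c * Real.exp (-b * |x - t|)) * φ x ∂volume := by
    have h := lintegral_add_right_eq_self
      (μ := (volume : Measure ℝ))
      (fun y => ENNReal.ofReal (c * Real.exp (-b * |y - t|)) * φ y) t
    rw [← h]
    refine lintegral_congr fun x => ?_
    simp [add_sub_cancel_right]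
  rw [step]
  calc ∫⁻ x, ENNReal.ofReal (c * Real.exp (-b * |x - t|)) * φ x ∂volume
      ≤ ∫⁻ x, ENNReal.ofReal (Real.exp (b * s)) *
          (((fun x : ℝ => ENNReal.ofReal (c * Real.exp (-b * |x|))) * φ) x) ∂volume := by
        refine lintegral_mono fun x => ?_
        simp only [Pi.mul_apply]
        calc ENNReal.ofReal (c * Real.exp (-b * |x - t|)) * φ x
            ≤ (ENNReal.ofReal (Real.exp (b * s)) *
                ENNReal.ofReal (c * Real.exp (-b * |x|))) * φ x :=
              mul_le_mul_left (lapDensity_shift_le hc hb hts x) _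
          _ = ENNReal.ofReal (Real.exp (b * s)) *
                (ENNReal.ofReal (c * Real.exp (-b * |x|)) * φ x) := mul_assoc _ _ _
    _ = ENNReal.ofReal (Real.exp (b * s)) *
          ∫⁻ x, ((fun x : ℝ => ENNReal.ofReal (c * Real.exp (-b * |x|))) * φ) x ∂volume :=
        lintegral_const_mul' _ _ ENNReal.ofReal_ne_top

/-- Measure version of the shift inequality. -/
lemma lap_shift_measure {c b : ℝ} (hc : 0 ≤ c) (hb : 0 ≤ b) (t s : ℝ) (hts : |t| ≤ s)
    {D : Set ℝ} (hD : MeasurableSet D) :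
    (volume.withDensity fun x : ℝ => ENNReal.ofReal (c * Real.exp (-b * |x|)))
        ((fun x => x + t) ⁻¹' D)
      ≤ ENNReal.ofReal (Real.exp (b * s)) *
        (volume.withDensity fun x : ℝ => ENNReal.ofReal (c * Real.exp (-b * |x|))) D := by
  have h := lap_shift_lintegral hc hb t s hts (D.indicator 1) (measurable_one.indicator hD)
  have h1 : ∀ x : ℝ, D.indicator (1 : ℝ → ℝ≥0∞) (x + t)
      = ((fun x : ℝ => x + t) ⁻¹' D).indicator 1 x := by
    intro x
    by_cases hx : x + t ∈ D <;> simp [Set.indicator, hx]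
  simp_rw [h1] at h
  rwa [lintegral_indicator_one ((measurable_add_const t) hD),
    lintegral_indicator_one hD] at h

/-- Shift of a single coordinate for the product of Laplace-type measures. -/
lemma pi_lap_shift_lintegral {m : ℕ} {c b : ℝ} (hc : 0 ≤ c) (hb : 0 ≤ b)
    (t s : ℝ) (hts : |t| ≤ s) (j : Fin (m + 1))
    (ψ : (Fin (m + 1) → ℝ) → ℝ≥0∞) (hψ : Measurable ψ) :
    ∫⁻ η, ψ (η + Pi.single j t)
        ∂(Measure.pi fun _ : Fin (m + 1) =>
          volume.withDensity fun x : ℝ => ENNReal.ofReal (c * Real.exp (-b * |x|)))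
      ≤ ENNReal.ofReal (Real.exp (b * s)) *
        ∫⁻ η, ψ η ∂(Measure.pi fun _ : Fin (m + 1) =>
          volume.withDensity fun x : ℝ => ENNReal.ofReal (c * Real.exp (-b * |x|))) := by
  set L : Measure ℝ :=
    volume.withDensity fun x : ℝ => ENNReal.ofReal (c * Real.exp (-b * |x|)) with hL
  haveI : SigmaFinite L := lapMeasure_sigmaFinite c b hc hb
  set e := MeasurableEquiv.piFinSuccAbove (fun _ : Fin (m + 1) => ℝ) j with he
  have hmp := (measurePreserving_piFinSuccAbove (fun _ : Fin (m + 1) => L) j).symm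
  have hsymm : ∀ p : ℝ × (Fin m → ℝ), e.symm p = j.insertNth p.1 p.2 := fun p => rfl
  have hins : ∀ (a : ℝ) (y : Fin m → ℝ),
      (j.insertNth a y : Fin (m + 1) → ℝ) + Pi.single j t = j.insertNth (a + t) y := by
    intro a y
    funext i
    rcases eq_or_ne i j with rfl | hij
    · simp
    · obtain ⟨k, rfl⟩ := Fin.exists_succAbove_eq hij
      simp [Fin.insertNth_apply_succAbove, Pi.single_eq_of_ne (Fin.succAbove_ne j k)]
  have hg : Measurable fun η : Fin (m + 1) → ℝ => ψ (η + Pi.single j t) :=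
    hψ.comp (measurable_id.add_const _)
  have key1 : ∫⁻ η, ψ (η + Pi.single j t) ∂(Measure.pi fun _ : Fin (m + 1) => L)
      = ∫⁻ p : ℝ × (Fin m → ℝ), ψ (j.insertNth (p.1 + t) p.2)
          ∂(L.prod (Measure.pi fun _ : Fin m => L)) := by
    rw [← hmp.lintegral_comp hg]
    exact lintegral_congr fun p => by rw [hsymm p, hins]
  have key2 : ∫⁻ η, ψ η ∂(Measure.pi fun _ : Fin (m + 1) => L)
      = ∫⁻ p : ℝ × (Fin m → ℝ), ψ (j.insertNth p.1 p.2)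
          ∂(L.prod (Measure.pi fun _ : Fin m => L)) := by
    rw [← hmp.lintegral_comp hψ]
    exact lintegral_congr fun p => by rw [hsymm p]
  rw [key1, key2]
  have hF : Measurable fun p : ℝ × (Fin m → ℝ) => ψ (j.insertNth p.1 p.2) :=
    hψ.comp e.symm.measurable
  have hF' : Measurable fun p : ℝ × (Fin m → ℝ) => ψ (j.insertNth (p.1 + t) p.2) :=
    hF.comp ((measurable_fst.add_const t).prodMk measurable_snd)
  rw [lintegral_prod _ hF'.aemeasurable, lintegral_prod _ hF.aemeasurable]
  have hΦ : Measurable fun a : ℝ =>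
      ∫⁻ y, ψ (j.insertNth a y) ∂(Measure.pi fun _ : Fin m => L) :=
    hF.lintegral_prod_right'
  exact lap_shift_lintegral hc hb t s hts
    (fun a => ∫⁻ y, ψ (j.insertNth a y) ∂(Measure.pi fun _ : Fin m => L)) hΦ

end Aux

/-- Numerical Sparse Vector Technique (with `N = 1`) is `ε`-differentially private. -/
theorem numerical_svt_dp (n : ℕ) (hn : 1 ≤ n) (ε : ℝ) (hε : 0 < ε) (T : ℝ)
    (μ : Measure (ℝ × (Fin n → ℝ) × ℝ))
    (hμ : μ = (volume.withDensity
        (fun x => ENNReal.ofReal ((ε / 6) * Real.exp (-(ε / 3) * |x|)))).prod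
      ((Measure.pi (fun _ : Fin n => volume.withDensity
        (fun x => ENNReal.ofReal ((ε / 12) * Real.exp (-(ε / 6) * |x|))))).prod
       (volume.withDensity
        (fun x => ENNReal.ofReal ((ε / 6) * Real.exp (-(ε / 3) * |x|))))))
    (NumAT : (Fin n → ℝ) → Fin n → Set ℝ → Set (ℝ × (Fin n → ℝ) × ℝ))
    (hNumAT : ∀ q j G, NumAT q j G = {p : ℝ × (Fin n → ℝ) × ℝ |
      (∀ i, i < j → q i + p.2.1 i < T + p.1) ∧ q j + p.2.1 j ≥ T + p.1 ∧
        (q j + p.2.2) ∈ G})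
    (q₁ q₂ : Fin n → ℝ) (hadj : ∀ i, |q₁ i - q₂ i| ≤ 1) (j : Fin n)
    (G : Set ℝ) (hG : MeasurableSet G) :
    μ (NumAT q₁ j G) ≤ ENNReal.ofReal (Real.exp ε) * μ (NumAT q₂ j G) := by
  obtain ⟨m, rfl⟩ : ∃ m, n = m + 1 := ⟨n - 1, (Nat.succ_pred_eq_of_pos hn).symm⟩
  subst hμ
  rw [hNumAT, hNumAT]
  haveI h1sf : SigmaFinite (volume.withDensity fun x => ENNReal.ofReal (ε / 6 * Real.exp (-(ε / 3) * |x|))) :=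
    lapMeasure_sigmaFinite (ε / 6) (ε / 3) (by positivity) (by positivity)
  haveI h2sf : SigmaFinite (volume.withDensity fun x => ENNReal.ofReal (ε / 12 * Real.exp (-(ε / 6) * |x|))) :=
    lapMeasure_sigmaFinite (ε / 12) (ε / 6) (by positivity) (by positivity)
  have hmz : Measurable fun p : ℝ × (Fin (m + 1) → ℝ) × ℝ => p.1 := measurable_fst
  have hmη : ∀ i : Fin (m + 1), Measurable fun p : ℝ × (Fin (m + 1) → ℝ) × ℝ => p.2.1 i :=
    fun i => (measurable_pi_apply i).comp (measurable_fst.comp measurable_snd)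
  have hmw : Measurable fun p : ℝ × (Fin (m + 1) → ℝ) × ℝ => p.2.2 := measurable_snd.comp measurable_snd
  have hA2a : MeasurableSet {p : ℝ × (Fin (m + 1) → ℝ) × ℝ | ∀ i, i < j → q₂ i + p.2.1 i < T + p.1} := by
    have heq : {p : ℝ × (Fin (m + 1) → ℝ) × ℝ | ∀ i, i < j → q₂ i + p.2.1 i < T + p.1}
        = ⋂ i : Fin (m + 1), {p : ℝ × (Fin (m + 1) → ℝ) × ℝ | i < j → q₂ i + p.2.1 i < T + p.1} := by
      ext p; simp
    rw [heq]
    refine MeasurableSet.iInter fun i => ?_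
    by_cases hij : i < j
    · have heq2 : {p : ℝ × (Fin (m + 1) → ℝ) × ℝ | i < j → q₂ i + p.2.1 i < T + p.1}
          = {p : ℝ × (Fin (m + 1) → ℝ) × ℝ | q₂ i + p.2.1 i < T + p.1} := by
        ext p; simp [hij]
      rw [heq2]
      exact measurableSet_lt (measurable_const.add (hmη i)) (measurable_const.add hmz)
    · have heq2 : {p : ℝ × (Fin (m + 1) → ℝ) × ℝ | i < j → q₂ i + p.2.1 i < T + p.1} = Set.univ := by
        ext p; simp [hij]
      rw [heq2]; exact MeasurableSet.univ
  have hA2b : MeasurableSet {p : ℝ × (Fin (m + 1) → ℝ) × ℝ | q₂ j + p.2.1 j ≥ T + p.1} :=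
    measurableSet_le (measurable_const.add hmz) (measurable_const.add (hmη j))
  have hA2c : MeasurableSet {p : ℝ × (Fin (m + 1) → ℝ) × ℝ | (q₂ j + p.2.2) ∈ G} :=
    (measurable_const.add hmw) hG
  have hA2 : MeasurableSet {p : ℝ × (Fin (m + 1) → ℝ) × ℝ |
      (∀ i, i < j → q₂ i + p.2.1 i < T + p.1) ∧ q₂ j + p.2.1 j ≥ T + p.1 ∧
        (q₂ j + p.2.2) ∈ G} :=
    hA2a.inter (hA2b.inter hA2c)
  have hS : Measurable (fun p : ℝ × (Fin (m + 1) → ℝ) × ℝ => (p.1 + 1, (p.2.1 + Pi.single j 2, p.2.2 + (q₁ j - q₂ j)))) :=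
    (measurable_fst.add_const 1).prodMk
      (((measurable_fst.comp measurable_snd).add_const (Pi.single j 2)).prodMk
        ((measurable_snd.comp measurable_snd).add_const (q₁ j - q₂ j)))
  have hsub : {p : ℝ × (Fin (m + 1) → ℝ) × ℝ | (∀ i, i < j → q₁ i + p.2.1 i < T + p.1) ∧ q₁ j + p.2.1 j ≥ T + p.1 ∧ (q₁ j + p.2.2) ∈ G} ⊆ (fun p : ℝ × (Fin (m + 1) → ℝ) × ℝ => (p.1 + 1, (p.2.1 + Pi.single j 2, p.2.2 + (q₁ j - q₂ j)))) ⁻¹' {p : ℝ × (Fin (m + 1) → ℝ) × ℝ | (∀ i, i < j → q₂ i + p.2.1 i < T + p.1) ∧ q₂ j + p.2.1 j ≥ T + p.1 ∧ (q₂ j + p.2.2) ∈ G} := by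
    rintro ⟨z, η, w⟩ ⟨h1, h2, h3⟩
    refine ⟨fun i hij => ?_, ?_, ?_⟩
    · have hne : i ≠ j := Fin.ne_of_lt hij
      have := h1 i hij
      have habs := abs_le.1 (hadj i)
      simp only [Pi.add_apply, Pi.single_eq_of_ne hne]
      linarith
    · have habs := abs_le.1 (hadj j)
      simp only [Pi.add_apply, Pi.single_eq_same]
      linarith [h2]
    · show q₂ j + (w + (q₁ j - q₂ j)) ∈ G
      have : q₂ j + (w + (q₁ j - q₂ j)) = q₁ j + w := by ring
      rw [this]; exact h3
  have C1 : ∀ C : Set ((Fin (m + 1) → ℝ) × ℝ), MeasurableSet C →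
      ((Measure.pi fun _ : Fin (m + 1) => (volume.withDensity fun x => ENNReal.ofReal (ε / 12 * Real.exp (-(ε / 6) * |x|)))).prod (volume.withDensity fun x => ENNReal.ofReal (ε / 6 * Real.exp (-(ε / 3) * |x|)))) ((Prod.map (fun η : Fin (m + 1) → ℝ => η + Pi.single j 2) (fun w : ℝ => w + (q₁ j - q₂ j))) ⁻¹' C) ≤ ENNReal.ofReal (Real.exp (ε / 3 * 1)) * (ENNReal.ofReal (Real.exp (ε / 6 * 2)) * ((Measure.pi fun _ : Fin (m + 1) => (volume.withDensity fun x => ENNReal.ofReal (ε / 12 * Real.exp (-(ε / 6) * |x|)))).prod (volume.withDensity fun x => ENNReal.ofReal (ε / 6 * Real.exp (-(ε / 3) * |x|)))) C) := by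
    intro C hC
    have hmapm : Measurable (Prod.map (fun η : Fin (m + 1) → ℝ => η + Pi.single j 2) (fun w : ℝ => w + (q₁ j - q₂ j))) :=
      (measurable_id.add_const _).prodMap (measurable_id.add_const _)
    rw [Measure.prod_apply (hmapm hC), Measure.prod_apply hC]
    have hΨ : Measurable fun η : Fin (m + 1) → ℝ => (volume.withDensity fun x => ENNReal.ofReal (ε / 6 * Real.exp (-(ε / 3) * |x|))) (Prod.mk η ⁻¹' C) :=
      measurable_measure_prodMk_left hC
    calc ∫⁻ η, (volume.withDensity fun x => ENNReal.ofReal (ε / 6 * Real.exp (-(ε / 3) * |x|))) (Prod.mk η ⁻¹' ((Prod.map (fun η : Fin (m + 1) → ℝ => η + Pi.single j 2) (fun w : ℝ => w + (q₁ j - q₂ j))) ⁻¹' C)) ∂(Measure.pi fun _ : Fin (m + 1) => (volume.withDensity fun x => ENNReal.ofReal (ε / 12 * Real.exp (-(ε / 6) * |x|))))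
        ≤ ∫⁻ η, ENNReal.ofReal (Real.exp (ε / 3 * 1)) * (volume.withDensity fun x => ENNReal.ofReal (ε / 6 * Real.exp (-(ε / 3) * |x|))) (Prod.mk (η + Pi.single j 2) ⁻¹' C) ∂(Measure.pi fun _ : Fin (m + 1) => (volume.withDensity fun x => ENNReal.ofReal (ε / 12 * Real.exp (-(ε / 6) * |x|)))) := by
          refine lintegral_mono fun η => ?_
          have hpre : Prod.mk η ⁻¹' ((Prod.map (fun η : Fin (m + 1) → ℝ => η + Pi.single j 2) (fun w : ℝ => w + (q₁ j - q₂ j))) ⁻¹' C)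
              = (fun w : ℝ => w + (q₁ j - q₂ j)) ⁻¹' (Prod.mk (η + Pi.single j 2) ⁻¹' C) := rfl
          rw [hpre]
          exact lap_shift_measure (by positivity) (by positivity) (q₁ j - q₂ j) 1 (hadj j)
            (measurable_prodMk_left hC)
      _ = ENNReal.ofReal (Real.exp (ε / 3 * 1)) * ∫⁻ η, (volume.withDensity fun x => ENNReal.ofReal (ε / 6 * Real.exp (-(ε / 3) * |x|))) (Prod.mk (η + Pi.single j 2) ⁻¹' C) ∂(Measure.pi fun _ : Fin (m + 1) => (volume.withDensity fun x => ENNReal.ofReal (ε / 12 * Real.exp (-(ε / 6) * |x|)))) :=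
          lintegral_const_mul' _ _ ENNReal.ofReal_ne_top
      _ ≤ ENNReal.ofReal (Real.exp (ε / 3 * 1)) * (ENNReal.ofReal (Real.exp (ε / 6 * 2)) * ∫⁻ η, (volume.withDensity fun x => ENNReal.ofReal (ε / 6 * Real.exp (-(ε / 3) * |x|))) (Prod.mk η ⁻¹' C) ∂(Measure.pi fun _ : Fin (m + 1) => (volume.withDensity fun x => ENNReal.ofReal (ε / 12 * Real.exp (-(ε / 6) * |x|))))) :=
          mul_le_mul_right
            (pi_lap_shift_lintegral (by positivity) (by positivity) 2 2 (by norm_num) j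
              (fun η => (volume.withDensity fun x => ENNReal.ofReal (ε / 6 * Real.exp (-(ε / 3) * |x|))) (Prod.mk η ⁻¹' C)) hΨ) _
  have hΦm : Measurable fun z : ℝ => ((Measure.pi fun _ : Fin (m + 1) => (volume.withDensity fun x => ENNReal.ofReal (ε / 12 * Real.exp (-(ε / 6) * |x|)))).prod (volume.withDensity fun x => ENNReal.ofReal (ε / 6 * Real.exp (-(ε / 3) * |x|)))) (Prod.mk z ⁻¹' {p : ℝ × (Fin (m + 1) → ℝ) × ℝ | (∀ i, i < j → q₂ i + p.2.1 i < T + p.1) ∧ q₂ j + p.2.1 j ≥ T + p.1 ∧ (q₂ j + p.2.2) ∈ G}) :=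
    measurable_measure_prodMk_left hA2
  calc ((volume.withDensity fun x => ENNReal.ofReal (ε / 6 * Real.exp (-(ε / 3) * |x|))).prod ((Measure.pi fun _ : Fin (m + 1) => (volume.withDensity fun x => ENNReal.ofReal (ε / 12 * Real.exp (-(ε / 6) * |x|)))).prod (volume.withDensity fun x => ENNReal.ofReal (ε / 6 * Real.exp (-(ε / 3) * |x|))))) {p : ℝ × (Fin (m + 1) → ℝ) × ℝ | (∀ i, i < j → q₁ i + p.2.1 i < T + p.1) ∧ q₁ j + p.2.1 j ≥ T + p.1 ∧ (q₁ j + p.2.2) ∈ G}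
      ≤ ((volume.withDensity fun x => ENNReal.ofReal (ε / 6 * Real.exp (-(ε / 3) * |x|))).prod ((Measure.pi fun _ : Fin (m + 1) => (volume.withDensity fun x => ENNReal.ofReal (ε / 12 * Real.exp (-(ε / 6) * |x|)))).prod (volume.withDensity fun x => ENNReal.ofReal (ε / 6 * Real.exp (-(ε / 3) * |x|))))) ((fun p : ℝ × (Fin (m + 1) → ℝ) × ℝ => (p.1 + 1, (p.2.1 + Pi.single j 2, p.2.2 + (q₁ j - q₂ j)))) ⁻¹' {p : ℝ × (Fin (m + 1) → ℝ) × ℝ | (∀ i, i < j → q₂ i + p.2.1 i < T + p.1) ∧ q₂ j + p.2.1 j ≥ T + p.1 ∧ (q₂ j + p.2.2) ∈ G}) := measure_mono hsub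
    _ = ∫⁻ z, ((Measure.pi fun _ : Fin (m + 1) => (volume.withDensity fun x => ENNReal.ofReal (ε / 12 * Real.exp (-(ε / 6) * |x|)))).prod (volume.withDensity fun x => ENNReal.ofReal (ε / 6 * Real.exp (-(ε / 3) * |x|)))) (Prod.mk z ⁻¹' ((fun p : ℝ × (Fin (m + 1) → ℝ) × ℝ => (p.1 + 1, (p.2.1 + Pi.single j 2, p.2.2 + (q₁ j - q₂ j)))) ⁻¹' {p : ℝ × (Fin (m + 1) → ℝ) × ℝ | (∀ i, i < j → q₂ i + p.2.1 i < T + p.1) ∧ q₂ j + p.2.1 j ≥ T + p.1 ∧ (q₂ j + p.2.2) ∈ G})) ∂(volume.withDensity fun x => ENNReal.ofReal (ε / 6 * Real.exp (-(ε / 3) * |x|))) := Measure.prod_apply (hS hA2)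
    _ ≤ ∫⁻ z, ENNReal.ofReal (Real.exp (ε / 3 * 1)) * (ENNReal.ofReal (Real.exp (ε / 6 * 2)) * ((Measure.pi fun _ : Fin (m + 1) => (volume.withDensity fun x => ENNReal.ofReal (ε / 12 * Real.exp (-(ε / 6) * |x|)))).prod (volume.withDensity fun x => ENNReal.ofReal (ε / 6 * Real.exp (-(ε / 3) * |x|)))) (Prod.mk (z + 1) ⁻¹' {p : ℝ × (Fin (m + 1) → ℝ) × ℝ | (∀ i, i < j → q₂ i + p.2.1 i < T + p.1) ∧ q₂ j + p.2.1 j ≥ T + p.1 ∧ (q₂ j + p.2.2) ∈ G})) ∂(volume.withDensity fun x => ENNReal.ofReal (ε / 6 * Real.exp (-(ε / 3) * |x|))) := by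
        refine lintegral_mono fun z => ?_
        have hpre : Prod.mk z ⁻¹' ((fun p : ℝ × (Fin (m + 1) → ℝ) × ℝ => (p.1 + 1, (p.2.1 + Pi.single j 2, p.2.2 + (q₁ j - q₂ j)))) ⁻¹' {p : ℝ × (Fin (m + 1) → ℝ) × ℝ | (∀ i, i < j → q₂ i + p.2.1 i < T + p.1) ∧ q₂ j + p.2.1 j ≥ T + p.1 ∧ (q₂ j + p.2.2) ∈ G})
            = (Prod.map (fun η : Fin (m + 1) → ℝ => η + Pi.single j 2) (fun w : ℝ => w + (q₁ j - q₂ j))) ⁻¹' (Prod.mk (z + 1) ⁻¹' {p : ℝ × (Fin (m + 1) → ℝ) × ℝ | (∀ i, i < j → q₂ i + p.2.1 i < T + p.1) ∧ q₂ j + p.2.1 j ≥ T + p.1 ∧ (q₂ j + p.2.2) ∈ G}) := rfl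
        rw [hpre]
        exact C1 _ (measurable_prodMk_left hA2)
    _ = ENNReal.ofReal (Real.exp (ε / 3 * 1)) * (ENNReal.ofReal (Real.exp (ε / 6 * 2)) * ∫⁻ z, ((Measure.pi fun _ : Fin (m + 1) => (volume.withDensity fun x => ENNReal.ofReal (ε / 12 * Real.exp (-(ε / 6) * |x|)))).prod (volume.withDensity fun x => ENNReal.ofReal (ε / 6 * Real.exp (-(ε / 3) * |x|)))) (Prod.mk (z + 1) ⁻¹' {p : ℝ × (Fin (m + 1) → ℝ) × ℝ | (∀ i, i < j → q₂ i + p.2.1 i < T + p.1) ∧ q₂ j + p.2.1 j ≥ T + p.1 ∧ (q₂ j + p.2.2) ∈ G}) ∂(volume.withDensity fun x => ENNReal.ofReal (ε / 6 * Real.exp (-(ε / 3) * |x|)))) := by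
        rw [lintegral_const_mul' _ _ ENNReal.ofReal_ne_top,
          lintegral_const_mul' _ _ ENNReal.ofReal_ne_top]
    _ ≤ ENNReal.ofReal (Real.exp (ε / 3 * 1)) * (ENNReal.ofReal (Real.exp (ε / 6 * 2)) * (ENNReal.ofReal (Real.exp (ε / 3 * 1)) * ∫⁻ z, ((Measure.pi fun _ : Fin (m + 1) => (volume.withDensity fun x => ENNReal.ofReal (ε / 12 * Real.exp (-(ε / 6) * |x|)))).prod (volume.withDensity fun x => ENNReal.ofReal (ε / 6 * Real.exp (-(ε / 3) * |x|)))) (Prod.mk z ⁻¹' {p : ℝ × (Fin (m + 1) → ℝ) × ℝ | (∀ i, i < j → q₂ i + p.2.1 i < T + p.1) ∧ q₂ j + p.2.1 j ≥ T + p.1 ∧ (q₂ j + p.2.2) ∈ G}) ∂(volume.withDensity fun x => ENNReal.ofReal (ε / 6 * Real.exp (-(ε / 3) * |x|))))) := by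
        refine mul_le_mul_right (mul_le_mul_right ?_ _) _
        exact lap_shift_lintegral (by positivity) (by positivity) 1 1 (by norm_num)
          (fun z => ((Measure.pi fun _ : Fin (m + 1) => (volume.withDensity fun x => ENNReal.ofReal (ε / 12 * Real.exp (-(ε / 6) * |x|)))).prod (volume.withDensity fun x => ENNReal.ofReal (ε / 6 * Real.exp (-(ε / 3) * |x|)))) (Prod.mk z ⁻¹' {p : ℝ × (Fin (m + 1) → ℝ) × ℝ | (∀ i, i < j → q₂ i + p.2.1 i < T + p.1) ∧ q₂ j + p.2.1 j ≥ T + p.1 ∧ (q₂ j + p.2.2) ∈ G})) hΦm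
    _ = ENNReal.ofReal (Real.exp ε) * ((volume.withDensity fun x => ENNReal.ofReal (ε / 6 * Real.exp (-(ε / 3) * |x|))).prod ((Measure.pi fun _ : Fin (m + 1) => (volume.withDensity fun x => ENNReal.ofReal (ε / 12 * Real.exp (-(ε / 6) * |x|)))).prod (volume.withDensity fun x => ENNReal.ofReal (ε / 6 * Real.exp (-(ε / 3) * |x|))))) {p : ℝ × (Fin (m + 1) → ℝ) × ℝ | (∀ i, i < j → q₂ i + p.2.1 i < T + p.1) ∧ q₂ j + p.2.1 j ≥ T + p.1 ∧ (q₂ j + p.2.2) ∈ G} := by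
        rw [Measure.prod_apply hA2, ← mul_assoc, ← mul_assoc,
          ← ENNReal.ofReal_mul (Real.exp_nonneg _), ← Real.exp_add,
          ← ENNReal.ofReal_mul (Real.exp_nonneg _), ← Real.exp_add]
        have hε3 : ε / 3 * 1 + ε / 6 * 2 + ε / 3 * 1 = ε := by ring
        rw [hε3]
end
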